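/- For β = 1, the average degree D̄(α) = (1/n(α))·∑_{i=1}^{⌊e^α⌋} i·⌊e^α/i⌋ of an (α,1)-power law graph, where n(α) = ∑_{i=1}^{⌊e^α⌋} ⌊e^α/i⌋, satisfies D̄(α) ≥ (1−o(1))·e^α/(2α) as α → ∞. -/
import Mathlib


open Filter Real

/-- Number of vertices of an `(α,1)`-power law graph. -/
noncomputable def plg1NumVertices (α : ℝ) : ℝ :=
  ∑ i ∈ Finset.Icc 1 ⌊Real.exp α⌋₊, (⌊Real.exp α / (i : ℝ)⌋₊ : ℝ)

/-- Average degree of an `(α,1)`-power law graph: total degree divided by the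
number of vertices. -/
noncomputable def plg1AvgDegree (α : ℝ) : ℝ :=
  (∑ i ∈ Finset.Icc 1 ⌊Real.exp α⌋₊, (i : ℝ) * (⌊Real.exp α / (i : ℝ)⌋₊ : ℝ)) /
    plg1NumVertices α

lemma plg1_sum_id (N : ℕ) :
    ∑ i ∈ Finset.Icc 1 N, (i : ℝ) = (N : ℝ) * (N + 1) / 2 := by
  induction N with
  | zero => simp
  | succ n ih =>
      rw [Finset.sum_Icc_succ_top (by omega), ih]
      push_cast
      ring

lemma plg1_harmonic (N : ℕ) (hN : 1 ≤ N) :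
    ∑ i ∈ Finset.Icc 1 N, (1 : ℝ) / i ≤ 1 + Real.log N := by
  have h := harmonic_le_one_add_log N
  have he : ((harmonic N : ℚ) : ℝ) = ∑ i ∈ Finset.Icc 1 N, (1 : ℝ) / i := by
    rw [harmonic_eq_sum_Icc]
    push_cast
    simp [one_div]
  linarith [he ▸ h]

/-- The average degree of an `(α,1)`-power law graph satisfies
`D̄(α) ≥ (1−o(1))·e^α/(2α)` as `α → ∞`. -/
theorem plg1_avgDegree_lower :
    ∀ ε > (0 : ℝ), ∃ α₀ : ℝ, ∀ α ≥ α₀,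
      plg1AvgDegree α ≥ (1 - ε) * (Real.exp α / (2 * α)) := by
  intro ε hε
  refine ⟨max 2 (8 / ε), fun α hα => ?_⟩
  have hα2 : (2 : ℝ) ≤ α := le_trans (le_max_left _ _) hα
  have hαε : 8 / ε ≤ α := le_trans (le_max_right _ _) hα
  have hεα : 8 ≤ ε * α := by
    rw [div_le_iff₀ hε] at hαε
    linarith
  set E : ℝ := Real.exp α with hE
  set N : ℕ := ⌊E⌋₊ with hN
  have hEpos : 0 < E := Real.exp_pos α
  have hαE : α ≤ E := by
    have := Real.add_one_le_exp α
    linarith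
  have hE7 : (7 : ℝ) ≤ E := by
    have : Real.exp 2 ≤ E := Real.exp_le_exp.2 hα2
    have h2 : (7 : ℝ) ≤ Real.exp 2 := by
      have he : Real.exp 2 = Real.exp 1 * Real.exp 1 := by
        rw [← Real.exp_add]; norm_num
      nlinarith [Real.exp_one_gt_d9]
    linarith
  have hNle : (N : ℝ) ≤ E := Nat.floor_le hEpos.le
  have hNge : E - 1 ≤ (N : ℝ) := by
    have := Nat.sub_one_lt_floor E
    linarith
  have hN1 : 1 ≤ N := by
    have : (1 : ℝ) ≤ N := by linarith
    exact_mod_cast this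
  -- lower bound on total degree
  have hT : (N : ℝ) * E - (N : ℝ) * (N + 1) / 2 ≤
      ∑ i ∈ Finset.Icc 1 N, (i : ℝ) * (⌊E / (i : ℝ)⌋₊ : ℝ) := by
    have h1 : ∑ i ∈ Finset.Icc 1 N, (E - (i : ℝ)) ≤
        ∑ i ∈ Finset.Icc 1 N, (i : ℝ) * (⌊E / (i : ℝ)⌋₊ : ℝ) := by
      apply Finset.sum_le_sum
      intro i hi
      have hi1 : 1 ≤ i := (Finset.mem_Icc.1 hi).1
      have hipos : (0 : ℝ) < i := by exact_mod_cast hi1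
      have hfl : E / (i : ℝ) - 1 ≤ (⌊E / (i : ℝ)⌋₊ : ℝ) := (Nat.sub_one_lt_floor _).le
      have := mul_le_mul_of_nonneg_left hfl hipos.le
      calc E - (i : ℝ) = (i : ℝ) * (E / i - 1) := by field_simp
        _ ≤ (i : ℝ) * (⌊E / (i : ℝ)⌋₊ : ℝ) := this
    have h2 : ∑ i ∈ Finset.Icc 1 N, (E - (i : ℝ)) =
        (N : ℝ) * E - (N : ℝ) * (N + 1) / 2 := by
      rw [Finset.sum_sub_distrib, Finset.sum_const, Nat.card_Icc, plg1_sum_id]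
      simp [nsmul_eq_mul]
    linarith
  -- upper bound on number of vertices
  have hn : plg1NumVertices α ≤ E * (1 + α) := by
    have h1 : plg1NumVertices α ≤ ∑ i ∈ Finset.Icc 1 N, E * (1 / i) := by
      apply Finset.sum_le_sum
      intro i hi
      have hi1 : 1 ≤ i := (Finset.mem_Icc.1 hi).1
      have hipos : (0 : ℝ) < i := by exact_mod_cast hi1
      have := Nat.floor_le (a := E / (i : ℝ)) (by positivity)
      rw [mul_one_div]
      exact this
    rw [← Finset.mul_sum] at h1
    have h2 : ∑ i ∈ Finset.Icc 1 N, (1 : ℝ) / i ≤ 1 + α := by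
      refine (plg1_harmonic N hN1).trans ?_
      have : Real.log N ≤ Real.log E := Real.log_le_log (by exact_mod_cast hN1) hNle
      rw [hE, Real.log_exp] at this
      linarith
    calc plg1NumVertices α ≤ E * ∑ i ∈ Finset.Icc 1 N, (1 : ℝ) / i := h1
      _ ≤ E * (1 + α) := by nlinarith
  have hnpos : 0 < plg1NumVertices α := by
    unfold plg1NumVertices
    rw [← hE, ← hN]
    refine Finset.sum_pos' (fun i _ => by positivity) ⟨1, Finset.mem_Icc.2 ⟨le_refl _, hN1⟩, ?_⟩
    have : (0:ℝ) < (⌊E / (1:ℕ)⌋₊ : ℕ) := by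
      simp only [Nat.cast_one, div_one]
      exact_mod_cast Nat.lt_of_lt_of_le Nat.zero_lt_one hN1
    exact_mod_cast this
  -- combine
  have hB : (0:ℝ) ≤ (N : ℝ) * E - (N : ℝ) * (N + 1) / 2 := by nlinarith
  have key : ((N : ℝ) * E - (N : ℝ) * (N + 1) / 2) / (E * (1 + α)) ≤ plg1AvgDegree α := by
    unfold plg1AvgDegree
    rw [← hE, ← hN]
    exact div_le_div₀ (hB.trans hT) hT hnpos hn
  refine le_trans ?_ key
  have hαpos : (0:ℝ) < α := by linarith
  rw [show (1 - ε) * (E / (2 * α)) = ((1 - ε) * E) / (2 * α) by ring,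
    div_le_div_iff₀ (by positivity) (by positivity)]
  have h1 : α * (E - 1) * (E - 1) ≤ ((N : ℝ) * E - (N : ℝ) * (N + 1) / 2) * (2 * α) := by
    nlinarith [mul_nonneg (mul_nonneg hαpos.le (by linarith : (0:ℝ) ≤ (N:ℝ) - (E - 1)))
      (by linarith : (0:ℝ) ≤ E - (N:ℝ)), mul_pos hαpos hEpos]
  have f1 : 8 * (E * E) ≤ ε * α * (E * E) :=
    mul_le_mul_of_nonneg_right hεα (by positivity)
  have f2 : α * E ≤ E * E := mul_le_mul_of_nonneg_right hαE hEpos.le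
  have f3 : (0:ℝ) ≤ ε * (E * E) := by positivity
  have h2 : (1 - ε) * E * (E * (1 + α)) ≤ α * (E - 1) * (E - 1) := by nlinarith
  linarith
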